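/- arXiv:1509.08269 — 5 statements merged into one kernel-verified Lean document; each statement's English description precedes it below -/
import Mathlib

section
/- Let $\nabla R$ be an algebraic covariant derivative of a curvature tensor on a real vector space $V$, i.e. $\nabla_x R$ is an algebraic curvature tensor for each $x$ and the second Bianchi identity holds. Then applying the Young symmetrizer for the tableau with rows $(1,3)$, $(2,4)$ (in the variables $x_1,x_2,x_3,x_4$, keeping $x_5$ fixed) to the function $(x_1,x_2,x_3,x_4) \mapsto \nabla_{x_1}R(x_3,x_2,x_5,x_4)$ yields $6\,\nabla_{x_5}R(x_1,x_2,x_3,x_4)$. -/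
/-!
Write `T a b c d = ∇_a R(x₅, b, c, d)`. Pair symmetry turns the input tensor into
`T x₁ x₄ x₃ x₂`, and the second Bianchi identity gives `∇_{x₅} R(a,b,c,d) = T a b c d - T b a c d`.
Besides being antisymmetric in its last two slots, `T` has a vanishing cyclic sum over its last
three slots (first Bianchi identity) and over slots `1, 3, 4` (second Bianchi identity). These
make the row symmetrization of `T a d c b` equal to `3 T` plus a term killed by the column
antisymmetrization, while the column antisymmetrization doubles `T a b c d - T b a c d`.
-/

section YoungSymmetrizer

variable {α R : Type*}

section Defs

variable [AddCommGroup R]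

def rowSymmetrize (p : α → α → α → α → R) (a b c d : α) : R :=
  p a b c d + p c b a d + p a d c b + p c d a b

def colAntisymmetrize (t : α → α → α → α → R) (a b c d : α) : R :=
  t a b c d - t b a c d - t a b d c + t b a d c

/-- The Young symmetrizer of the tableau with rows `(1 3)`, `(2 4)`. -/
def youngSymmetrize (p : α → α → α → α → R) : α → α → α → α → R :=
  colAntisymmetrize (rowSymmetrize p)

end Defs

variable [CommRing R] {T : α → α → α → α → R}

theorem colAntisymmetrize_of_antisymm (h_anti : ∀ a b c d, T a b c d = -T a b d c)
    (a b c d : α) : colAntisymmetrize T a b c d = 2 * (T a b c d - T b a c d) := by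
  unfold colAntisymmetrize
  linear_combination h_anti b a c d - h_anti a b c d

theorem rowSymmetrize_eq (h_anti : ∀ a b c d, T a b c d = -T a b d c)
    (h_bianchi : ∀ a b c d, T a b c d + T a c d b + T a d b c = 0)
    (h_cyc : ∀ a b c d, T a b c d + T c b d a + T d b a c = 0) (a b c d : α) :
    rowSymmetrize (fun a b c d => T a d c b) a b c d
      = 3 * T a b c d + (T a c d b + T d b a c + T c d a b) := by
  unfold rowSymmetrize
  linear_combination -h_bianchi a b c d - h_cyc a b c d + h_anti a d b c + h_anti c b a d

theorem colAntisymmetrize_remainder_eq_zero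
    (h_anti : ∀ a b c d, T a b c d = -T a b d c)
    (h_bianchi : ∀ a b c d, T a b c d + T a c d b + T a d b c = 0)
    (h_cyc : ∀ a b c d, T a b c d + T c b d a + T d b a c = 0) (a b c d : α) :
    colAntisymmetrize (fun a b c d => T a c d b + T d b a c + T c d a b) a b c d = 0 := by
  unfold colAntisymmetrize
  linear_combination -h_cyc a c b d + h_cyc a d b c + h_bianchi c a b d - h_bianchi d a b c
    + h_anti a c b d - h_anti a d b c + h_anti d b a c - h_anti c b a d
    - h_anti c d a b + h_anti d c a b

theorem youngSymmetrize_eq (h_anti : ∀ a b c d, T a b c d = -T a b d c)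
    (h_bianchi : ∀ a b c d, T a b c d + T a c d b + T a d b c = 0)
    (h_cyc : ∀ a b c d, T a b c d + T c b d a + T d b a c = 0) (a b c d : α) :
    youngSymmetrize (fun a b c d => T a d c b) a b c d = 6 * (T a b c d - T b a c d) := by
  have h_rem := colAntisymmetrize_remainder_eq_zero h_anti h_bianchi h_cyc a b c d
  have h_main := colAntisymmetrize_of_antisymm h_anti a b c d
  unfold youngSymmetrize
  unfold colAntisymmetrize at h_rem h_main ⊢
  simp only [rowSymmetrize_eq h_anti h_bianchi h_cyc]
  linear_combination h_rem + 3 * h_main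

end YoungSymmetrizer

/-- `D x a b c d` stands for `∇_x R(a, b, c, d)`. -/
structure IsAlgCovDerivCurvature {α R : Type*} [Neg R] [Add R] [Zero R]
    (D : α → α → α → α → α → R) : Prop where
  antisymm : ∀ x a b c d, D x a b c d = -D x b a c d
  pair_symm : ∀ x a b c d, D x a b c d = D x c d a b
  bianchi_first : ∀ x a b c y, D x a b c y + D x b c a y + D x c a b y = 0
  bianchi_second : ∀ x1 x2 x3 y1 y2,
    D x1 x2 x3 y1 y2 + D x2 x3 x1 y1 y2 + D x3 x1 x2 y1 y2 = 0

namespace IsAlgCovDerivCurvature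

variable {α R : Type*} [CommRing R] {D : α → α → α → α → α → R}

theorem antisymm_right (hD : IsAlgCovDerivCurvature D) (x a b c d : α) :
    D x a b c d = -D x a b d c := by
  rw [hD.pair_symm, hD.antisymm, hD.pair_symm x d c]

theorem bianchi_first_right (hD : IsAlgCovDerivCurvature D) (x y a b c : α) :
    D x y a b c + D x y b c a + D x y c a b = 0 := by
  rw [hD.pair_symm x y a, hD.pair_symm x y b, hD.pair_symm x y c, hD.antisymm_right x b c,
    hD.antisymm_right x c a, hD.antisymm_right x a b]
  linear_combination -hD.bianchi_first x a b c y

theorem bianchi_second_right (hD : IsAlgCovDerivCurvature D) (y a b c d : α) :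
    D a y b c d + D c y b d a + D d y b a c = 0 := by
  rw [hD.pair_symm a, hD.pair_symm c, hD.pair_symm d]
  exact hD.bianchi_second a c d y b

theorem eq_sub_swap (hD : IsAlgCovDerivCurvature D) (x a b c d : α) :
    D x a b c d = D a x b c d - D b x a c d := by
  linear_combination hD.bianchi_second x a b c d - hD.antisymm a b x c d

end IsAlgCovDerivCurvature

theorem young_symmetrizer_nablaR_general (V : Type*)
    (D : V → V → V → V → V → ℝ)
    (hanti : ∀ x a b c d, D x a b c d = - D x b a c d)
    (hpair : ∀ x a b c d, D x a b c d = D x c d a b)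
    (hb1 : ∀ x a b c y, D x a b c y + D x b c a y + D x c a b y = 0)
    (hb2 : ∀ x1 x2 x3 y1 y2,
      D x1 x2 x3 y1 y2 + D x2 x3 x1 y1 y2 + D x3 x1 x2 y1 y2 = 0) :
    ∀ x1 x2 x3 x4 x5,
      (fun tp : V → V → V → V → ℝ =>
          tp x1 x2 x3 x4 - tp x2 x1 x3 x4 - tp x1 x2 x4 x3 + tp x2 x1 x4 x3)
        (fun a b c d =>
          (fun p : V → V → V → V → ℝ => p a b c d + p c b a d + p a d c b + p c d a b)
          (fun y1 y2 y3 y4 => D y1 y3 y2 x5 y4))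
      = 6 * D x5 x1 x2 x3 x4 := by
  intro x1 x2 x3 x4 x5
  have hD : IsAlgCovDerivCurvature D := ⟨hanti, hpair, hb1, hb2⟩
  have h_input : (fun a b c d => D a c b x5 d) = fun a b c d => D a x5 d c b := by
    funext a b c d
    exact hpair a c b x5 d
  change youngSymmetrize (fun a b c d => D a c b x5 d) x1 x2 x3 x4 = _
  rw [h_input, youngSymmetrize_eq (T := fun a b c d => D a x5 b c d)
    (hD.antisymm_right · x5) (hD.bianchi_first_right · x5) (hD.bianchi_second_right x5),
    ← hD.eq_sub_swap x5]

/-- Lemma on the case k = 1: applying the Young symmetrizer for the tableau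
with rows (1,3), (2,4) to `(x1,x2,x3,x4) ↦ ∇_{x1}R(x3,x2,x5,x4)` (keeping x5 fixed)
yields `6 ∇_{x5}R(x1,x2,x3,x4)`. -/
theorem young_symmetrizer_nablaR (V : Type*) [AddCommGroup V] [Module ℝ V]
    (D : V → V → V → V → V → ℝ)
    (hanti : ∀ x a b c d, D x a b c d = - D x b a c d)
    (hpair : ∀ x a b c d, D x a b c d = D x c d a b)
    (hb1 : ∀ x a b c y, D x a b c y + D x b c a y + D x c a b y = 0)
    (hb2 : ∀ x1 x2 x3 y1 y2,
      D x1 x2 x3 y1 y2 + D x2 x3 x1 y1 y2 + D x3 x1 x2 y1 y2 = 0) :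
    ∀ x1 x2 x3 x4 x5,
      (fun tp : V → V → V → V → ℝ =>
          tp x1 x2 x3 x4 - tp x2 x1 x3 x4 - tp x1 x2 x4 x3 + tp x2 x1 x4 x3)
        (fun a b c d =>
          (fun p : V → V → V → V → ℝ => p a b c d + p c b a d + p a d c b + p c d a b)
          (fun y1 y2 y3 y4 => D y1 y3 y2 x5 y4))
      = 6 * D x5 x1 x2 x3 x4 :=
  young_symmetrizer_nablaR_general V D hanti hpair hb1 hb2
end

section
/- Let $\nabla R$ be an algebraic covariant derivative of a curvature tensor on a real vector space $V$. Then the Young symmetrizer for the shape-$(3,2)$ tableau with rows $(1,3,5)$ and $(2,4)$ applied to $(x_1,\ldots,x_5) \mapsto \nabla_{x_5}R(x_1,x_2,x_3,x_4)$ equals $24\,\nabla_{x_5}R(x_1,x_2,x_3,x_4)$. -/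
/-!
Pair symmetry turns the sum over the row `{x2, x4}` into a second copy of the sum over the row
`{x1, x3, x5}`, so the row symmetrization is twice the sum of the six terms `∇_x R(a, u, b, v)`,
`(a, b, x)` running over the orderings of the first row. Group them by the derivative slot
`x`. After antisymmetrizing the columns, the two terms with `x = x5` give `6 ∇_{x5}R` by the
first Bianchi identity, and each of the other two pairs gives `3 ∇_{x5}R`, by the first Bianchi
identity followed by the second one. In total `2 (6 + 3 + 3) = 24`.
-/

section

open Equiv Finset

theorem Equiv.Perm.sum_fin_two {M : Type*} [AddCommMonoid M] (f : Fin 2 → Fin 2 → M) :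
    ∑ τ : Perm (Fin 2), f (τ 0) (τ 1) = f 0 1 + f 1 0 := by
  rw [show (univ : Finset (Perm (Fin 2))) = {1, swap 0 1} by decide,
    sum_insert (by decide), sum_singleton]
  rfl

theorem Equiv.Perm.sum_fin_three {M : Type*} [AddCommMonoid M]
    (f : Fin 3 → Fin 3 → Fin 3 → M) :
    ∑ σ : Perm (Fin 3), f (σ 0) (σ 1) (σ 2) =
      f 0 1 2 + f 1 0 2 + f 2 1 0 + f 0 2 1 + f 1 2 0 + f 2 0 1 := by
  rw [show (univ : Finset (Perm (Fin 3))) = {1, swap 0 1, swap 0 2, swap 1 2,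
      swap 0 1 * swap 1 2, swap 1 2 * swap 0 1} by decide,
    sum_insert (by decide), sum_insert (by decide), sum_insert (by decide),
    sum_insert (by decide), sum_insert (by decide), sum_singleton]
  simp only [add_assoc]
  rfl

variable {V R : Type*} [CommRing R]

structure IsAlgebraicCurvatureTensor (T : V → V → V → V → R) : Prop where
  antisymm : ∀ a b c d, T a b c d = -T b a c d
  pair_symm : ∀ a b c d, T a b c d = T c d a b
  bianchi : ∀ a b c d, T a b c d + T b c a d + T c a b d = 0

structure IsAlgebraicCurvatureDerivative (D : V → V → V → V → V → R) : Prop where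
  curvatureTensor : ∀ x, IsAlgebraicCurvatureTensor (D x)
  bianchi_second : ∀ x y z c d, D x y z c d + D y z x c d + D z x y c d = 0

-- The column antisymmetrizer, acting on the slots `x1 x2 x3 x4`; the slot `x5` is not in a column.
def colAlt (T : V → V → V → V → R) (a b c d : V) : R :=
  T a b c d - T b a c d - T a b d c + T b a d c

theorem colAlt_swap_pairs (T : V → V → V → V → R) (a b c d : V) :
    colAlt (fun a b c d => T c d a b) a b c d = colAlt T c d a b := by
  unfold colAlt
  abel

namespace IsAlgebraicCurvatureTensor

variable {T : V → V → V → V → R}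

theorem antisymm_right (hT : IsAlgebraicCurvatureTensor T) (a b c d : V) :
    T a b c d = -T a b d c := by
  rw [hT.pair_symm, hT.antisymm, hT.pair_symm d]

theorem sub_swap_one_four (hT : IsAlgebraicCurvatureTensor T) (a b c d : V) :
    T a b c d - T d b c a = T c b a d := by
  linear_combination hT.pair_symm a b c d - hT.pair_symm d b c a - hT.pair_symm c b a d
    - hT.antisymm c a d b - hT.antisymm a d c b + hT.bianchi c d a b

theorem colAlt_eq (hT : IsAlgebraicCurvatureTensor T) (a b c d : V) :
    colAlt T a b c d = 4 * T a b c d := by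
  unfold colAlt
  rw [hT.antisymm b a c d, hT.antisymm b a d c, hT.antisymm_right a b d c]
  ring

theorem colAlt_add_swap_one_three (hT : IsAlgebraicCurvatureTensor T) (a b c d : V) :
    colAlt (fun a b c d => T a b c d + T c b a d) a b c d = 6 * T a b c d := by
  have h := hT.colAlt_eq a b c d
  unfold colAlt at h ⊢
  linear_combination h + hT.sub_swap_one_four c b a d - hT.sub_swap_one_four c a b d
    - hT.antisymm a b c d

end IsAlgebraicCurvatureTensor

namespace IsAlgebraicCurvatureDerivative

variable {D : V → V → V → V → V → R}

theorem sub_swap_one_three (hD : IsAlgebraicCurvatureDerivative D) (a x b c d : V) :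
    D a x b c d - D b x a c d = D x a b c d := by
  linear_combination (hD.curvatureTensor a).antisymm x b c d - hD.bianchi_second x a b c d

theorem colAlt_deriv_left (hD : IsAlgebraicCurvatureDerivative D) (x a b c d : V) :
    colAlt (fun a u b v => D a b u x v + D a x u b v) a b c d = 3 * D x a b c d := by
  unfold colAlt
  linear_combination (hD.curvatureTensor a).sub_swap_one_four c b x d
    - (hD.curvatureTensor b).sub_swap_one_four c a x d
    - (hD.curvatureTensor a).antisymm_right x b d c
    + (hD.curvatureTensor b).antisymm_right x a d c + 3 * hD.sub_swap_one_three a x b c d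

theorem colAlt_deriv_right (hD : IsAlgebraicCurvatureDerivative D) (x a b c d : V) :
    colAlt (fun a u b v => D b x u a v + D b a u x v) a b c d = 3 * D x a b c d := by
  have h : (fun a u b v => D b x u a v + D b a u x v) =
      fun a u b v => D b a v x u + D b x v a u := by
    funext a u b v
    rw [(hD.curvatureTensor b).pair_symm x u, (hD.curvatureTensor b).pair_symm a u]
  rw [h, colAlt_swap_pairs (fun a u b v => D a b u x v + D a x u b v), hD.colAlt_deriv_left,
    (hD.curvatureTensor x).pair_symm c]

end IsAlgebraicCurvatureDerivative

theorem row_symmetrization_eq {D : V → V → V → V → V → R}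
    (hpair : ∀ x a b c d, D x a b c d = D x c d a b) (r : Fin 3 → V) (c : Fin 2 → V) :
    ∑ σ : Perm (Fin 3), ∑ τ : Perm (Fin 2),
        D (r (σ 2)) (r (σ 0)) (c (τ 0)) (r (σ 1)) (c (τ 1)) =
      2 * ((D (r 2) (r 0) (c 0) (r 1) (c 1) + D (r 2) (r 1) (c 0) (r 0) (c 1))
        + (D (r 0) (r 1) (c 0) (r 2) (c 1) + D (r 0) (r 2) (c 0) (r 1) (c 1))
        + (D (r 1) (r 2) (c 0) (r 0) (c 1) + D (r 1) (r 0) (c 0) (r 2) (c 1))) := by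
  have hτ : ∀ x a b, ∑ τ : Perm (Fin 2), D x a (c (τ 0)) b (c (τ 1)) =
      D x a (c 0) b (c 1) + D x b (c 0) a (c 1) := fun x a b => by
    rw [Perm.sum_fin_two (fun i j => D x a (c i) b (c j)), hpair x a (c 1) b (c 0)]
  simp only [hτ]
  rw [Perm.sum_fin_three fun i j k =>
    D (r k) (r i) (c 0) (r j) (c 1) + D (r k) (r j) (c 0) (r i) (c 1)]
  ring

end

theorem young_symmetrizer_nablaR_full_general (V : Type*)
    (D : V → V → V → V → V → ℝ)
    (hanti : ∀ x a b c d, D x a b c d = - D x b a c d)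
    (hpair : ∀ x a b c d, D x a b c d = D x c d a b)
    (hb1 : ∀ x a b c y, D x a b c y + D x b c a y + D x c a b y = 0)
    (hb2 : ∀ x1 x2 x3 y1 y2,
      D x1 x2 x3 y1 y2 + D x2 x3 x1 y1 y2 + D x3 x1 x2 y1 y2 = 0) :
    ∀ x1 x2 x3 x4 x5,
      (fun tp : (Fin 3 → V) → (Fin 2 → V) → ℝ =>
          tp ![x1, x3, x5] ![x2, x4] - tp ![x2, x3, x5] ![x1, x4]
            - tp ![x1, x4, x5] ![x2, x3] + tp ![x2, x4, x5] ![x1, x3])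
        (fun r c => ∑ σ : Equiv.Perm (Fin 3), ∑ τ : Equiv.Perm (Fin 2),
          -- positions (1,3,5) carry r∘σ, positions (2,4) carry c∘τ, and the function is
          -- p(y1,…,y5) = ∇_{y5}R(y1,y2,y3,y4)
          D (r (σ 2)) (r (σ 0)) (c (τ 0)) (r (σ 1)) (c (τ 1)))
      = 24 * D x5 x1 x2 x3 x4 := by
  intro x1 x2 x3 x4 x5
  have hD : IsAlgebraicCurvatureDerivative D := ⟨fun x => ⟨hanti x, hpair x, hb1 x⟩, hb2⟩
  have hx := (hD.curvatureTensor x5).colAlt_add_swap_one_three x1 x2 x3 x4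
  have ha := hD.colAlt_deriv_left x5 x1 x2 x3 x4
  have hb := hD.colAlt_deriv_right x5 x1 x2 x3 x4
  unfold colAlt at hx ha hb
  simp only [row_symmetrization_eq hpair, Matrix.cons_val_zero, Matrix.cons_val_one,
    Matrix.cons_val_two, Matrix.head_cons, Matrix.tail_cons]
  linear_combination 2 * (hx + ha + hb)

/-- case k = 1: the Young symmetrizer for the shape-(3,2) tableau with rows
(1,3,5), (2,4) applied to `(x1,…,x5) ↦ ∇_{x5}R(x1,x2,x3,x4)` equals
`24 ∇_{x5}R(x1,x2,x3,x4)`. Row action: symmetrize over permutations of `{x1,x3,x5}`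
(positions 1,3,5) and of `{x2,x4}` (positions 2,4); column action: antisymmetrize in the
pairs (x1,x2) and (x3,x4). -/
theorem young_symmetrizer_nablaR_full (V : Type*) [AddCommGroup V] [Module ℝ V]
    (D : V → V → V → V → V → ℝ)
    (hanti : ∀ x a b c d, D x a b c d = - D x b a c d)
    (hpair : ∀ x a b c d, D x a b c d = D x c d a b)
    (hb1 : ∀ x a b c y, D x a b c y + D x b c a y + D x c a b y = 0)
    (hb2 : ∀ x1 x2 x3 y1 y2,
      D x1 x2 x3 y1 y2 + D x2 x3 x1 y1 y2 + D x3 x1 x2 y1 y2 = 0) :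
    ∀ x1 x2 x3 x4 x5,
      (fun tp : (Fin 3 → V) → (Fin 2 → V) → ℝ =>
          tp ![x1, x3, x5] ![x2, x4] - tp ![x2, x3, x5] ![x1, x4]
            - tp ![x1, x4, x5] ![x2, x3] + tp ![x2, x4, x5] ![x1, x3])
        (fun r c => ∑ σ : Equiv.Perm (Fin 3), ∑ τ : Equiv.Perm (Fin 2),
          -- positions (1,3,5) carry r∘σ, positions (2,4) carry c∘τ, and the function is
          -- p(y1,…,y5) = ∇_{y5}R(y1,y2,y3,y4)
          D (r (σ 2)) (r (σ 0)) (c (τ 0)) (r (σ 1)) (c (τ 1)))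
      = 24 * D x5 x1 x2 x3 x4 :=
  young_symmetrizer_nablaR_full_general V D hanti hpair hb1 hb2
end

section
/- Let $\nabla^{2)}R \in \otimes^6 V^*$ be a linear algebraic curvature $2$-jet component, i.e. for each $x$ the tensor $\nabla^{2)}_{x,\cdot}R$ is an algebraic covariant derivative of a curvature tensor, and $\nabla^{2)}_{x,y}R = \nabla^{2)}_{y,x}R$ for all $x,y$ (Ricci identity with vanishing lower-order terms). Then the Young symmetrizer for the tableau with rows $(1,3)$, $(2,4)$ (keeping $x_5,x_6$ fixed) applied to $(x_1,x_2,x_3,x_4) \mapsto \nabla^{2)}_{x_1,x_3}R(x_5,x_2,x_6,x_4)$ equals $4\,\nabla^{2)}_{x_5,x_6}R(x_1,x_2,x_3,x_4)$. -/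
/-!
Writing `T x y a b c d` for `∇²_{x,y}R(a,b,c,d)`, two applications of the second Bianchi identity
move both derivative directions into the curvature slots, expressing `∇²_{x5,x6}R(x1,x2,x3,x4)` as
an alternating sum of terms `∇²_{xi,xj}R(x5,·,x6,·)`. Since the derivative slots commute, the row
symmetrizer merely doubles these terms, and averaging the formula over `(x5,x6)` and `(x6,x5)`
produces exactly the column antisymmetrization.
-/

section SecondBianchi

variable {V G : Type*} [AddCommGroup G]

theorem eq_sub_of_secondBianchi (T : V → V → V → V → V → V → G)
    (hanti : ∀ x y a b c d, T x y a b c d = - T x y b a c d)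
    (hpair : ∀ x y a b c d, T x y a b c d = T x y c d a b)
    (hb2 : ∀ x x1 x2 x3 y1 y2,
      T x x1 x2 x3 y1 y2 + T x x2 x3 x1 y1 y2 + T x x3 x1 x2 y1 y2 = 0)
    (a x b c d y : V) :
    T a x c d b y = T a d x c y b - T a c x d y b := by
  have hdx : T a c d x b y = T a c x d y b := by
    rw [hpair, hanti, hpair, hanti, neg_neg]
  have hcx : T a d x c b y = - T a d x c y b := by
    rw [hpair, hanti, hpair]
  have := hb2 a x c d b y
  rw [hdx, hcx] at this
  linear_combination (norm := abel_nf) this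

theorem eq_alternating_sum_of_secondBianchi (T : V → V → V → V → V → V → G)
    (hsym : ∀ x y a b c d, T x y a b c d = T y x a b c d)
    (hanti : ∀ x y a b c d, T x y a b c d = - T x y b a c d)
    (hpair : ∀ x y a b c d, T x y a b c d = T x y c d a b)
    (hb2 : ∀ x x1 x2 x3 y1 y2,
      T x x1 x2 x3 y1 y2 + T x x2 x3 x1 y1 y2 + T x x3 x1 x2 y1 y2 = 0)
    (x y a b c d : V) :
    T x y a b c d = T a c x d y b - T a d x c y b - T b c x d y a + T b d x c y a := by
  have hxa : T x a b y c d = T a d x c y b - T a c x d y b := by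
    rw [hsym, hpair, eq_sub_of_secondBianchi T hanti hpair hb2]
  have hxb : T x b y a c d = T b c x d y a - T b d x c y a := by
    rw [hsym, hanti, hpair, eq_sub_of_secondBianchi T hanti hpair hb2, neg_sub]
  have := hb2 x y a b c d
  rw [hxa, hxb] at this
  linear_combination (norm := abel_nf) this

end SecondBianchi

theorem young_symmetrizer_nabla2R_general (V : Type*)
    (T : V → V → V → V → V → V → ℝ)
    (hsym : ∀ x y a b c d, T x y a b c d = T y x a b c d)
    (hanti : ∀ x y a b c d, T x y a b c d = - T x y b a c d)
    (hpair : ∀ x y a b c d, T x y a b c d = T x y c d a b)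
    (hb2 : ∀ x x1 x2 x3 y1 y2,
      T x x1 x2 x3 y1 y2 + T x x2 x3 x1 y1 y2 + T x x3 x1 x2 y1 y2 = 0) :
    ∀ x1 x2 x3 x4 x5 x6,
      (fun tp : V → V → V → V → ℝ =>
          tp x1 x2 x3 x4 - tp x2 x1 x3 x4 - tp x1 x2 x4 x3 + tp x2 x1 x4 x3)
        (fun a b c d =>
          (fun p : V → V → V → V → ℝ => p a b c d + p c b a d + p a d c b + p c d a b)
          (fun y1 y2 y3 y4 => T y1 y3 x5 y2 x6 y4))
      = 4 * T x5 x6 x1 x2 x3 x4 := by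
  intro x1 x2 x3 x4 x5 x6
  have h56 := eq_alternating_sum_of_secondBianchi T hsym hanti hpair hb2 x5 x6 x1 x2 x3 x4
  have h65 := eq_alternating_sum_of_secondBianchi T hsym hanti hpair hb2 x6 x5 x1 x2 x3 x4
  rw [hsym x6 x5, hpair x1 x3 x6, hpair x1 x4 x6, hpair x2 x3 x6, hpair x2 x4 x6] at h65
  simp only [hsym x3 x1, hsym x4 x1, hsym x3 x2, hsym x4 x2]
  linear_combination -2 * h56 - 2 * h65

/-- Lemma for the case k = 2: for a linear algebraic curvature 2-jet
component `T = ∇²R`, the Young symmetrizer for the tableau with rows (1,3), (2,4)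
(keeping x5, x6 fixed) applied to `(x1,x2,x3,x4) ↦ ∇²_{x1,x3}R(x5,x2,x6,x4)` equals
`4 ∇²_{x5,x6}R(x1,x2,x3,x4)`. -/
theorem young_symmetrizer_nabla2R (V : Type*) [AddCommGroup V] [Module ℝ V]
    (T : V → V → V → V → V → V → ℝ)
    (hsym : ∀ x y a b c d, T x y a b c d = T y x a b c d)
    (hanti : ∀ x y a b c d, T x y a b c d = - T x y b a c d)
    (hpair : ∀ x y a b c d, T x y a b c d = T x y c d a b)
    (hb1 : ∀ x y a b c z, T x y a b c z + T x y b c a z + T x y c a b z = 0)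
    (hb2 : ∀ x x1 x2 x3 y1 y2,
      T x x1 x2 x3 y1 y2 + T x x2 x3 x1 y1 y2 + T x x3 x1 x2 y1 y2 = 0) :
    ∀ x1 x2 x3 x4 x5 x6,
      (fun tp : V → V → V → V → ℝ =>
          tp x1 x2 x3 x4 - tp x2 x1 x3 x4 - tp x1 x2 x4 x3 + tp x2 x1 x4 x3)
        (fun a b c d =>
          (fun p : V → V → V → V → ℝ => p a b c d + p c b a d + p a d c b + p c d a b)
          (fun y1 y2 y3 y4 => T y1 y3 x5 y2 x6 y4))
      = 4 * T x5 x6 x1 x2 x3 x4 :=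
  young_symmetrizer_nabla2R_general V T hsym hanti hpair hb2
end

section
/- Define $\tilde{Q}_k$ in the free associative $\mathbb{R}$-algebra on noncommuting generators $X_2, X_3, \ldots$ by $\tilde{Q}_{-1}=0$, $\tilde{Q}_0=1$, and $\tilde{Q}_k = -\frac{1}{k(k+1)}\sum_{\ell=2}^{k}\binom{k}{\ell}(\ell-1)\ell\, X_\ell \tilde{Q}_{k-\ell}$ for $k \geq 1$. Then for each $k \geq 1$, $\tilde{Q}_k = \sum_{I : \deg(I)=k} \frac{k!}{\Pi_I}\, \tilde{X}_{i_r}\cdots\tilde{X}_{i_1}$, where the sum is over finite sequences $I=(i_1,\ldots,i_r)$ with each $i_j \geq 2$ and $i_1+\cdots+i_r = k$, $\tilde{X}_j := -\frac{1}{(j-2)!}X_j$, and $\Pi_I := \prod_{m=1}^r (i_1+\cdots+i_m)(i_1+\cdots+i_m+1)$. -/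
/-!
Both sides satisfy the recurrence, and the recurrence determines the whole sequence from its
value at `0`. For the closed formula, split off the last block `ℓ = i_r` of `I = (I', ℓ)`: then
`Π_I = Π_{I'} · k(k+1)` and the word of `I` is `X̃_ℓ` times the word of `I'`, while
`C(k,ℓ)(ℓ-1)ℓ · (ℓ-2)! · (k-ℓ)! = k!` absorbs the rescaling `X_ℓ = -(ℓ-2)! X̃_ℓ`.
-/

open Finset

/-- The rescaled generator `X̃ⱼ = -(1/(j-2)!) Xⱼ` of the free algebra. -/
noncomputable def Xtilde (j : ℕ) : FreeAlgebra ℝ ℕ :=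
  (-(1 : ℝ) / (j - 2).factorial) • FreeAlgebra.ι ℝ j

/-- `Π_I = ∏ₘ (i₁+⋯+iₘ)(i₁+⋯+iₘ+1)` for a sequence `I = (i₁,…,i_r)`. -/
def PiI (l : List ℕ) : ℝ :=
  ∏ m ∈ Finset.range l.length,
    (((l.take (m + 1)).sum : ℝ) * ((l.take (m + 1)).sum + 1))

namespace Composition

variable {n ℓ : ℕ}

def withBlocksGE (m n : ℕ) : Finset (Composition n) :=
  univ.filter fun c => ∀ i ∈ c.blocks, m ≤ i

lemma mem_withBlocksGE {m : ℕ} {c : Composition n} :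
    c ∈ withBlocksGE m n ↔ ∀ i ∈ c.blocks, m ≤ i := by
  simp [withBlocksGE]

def concat (c : Composition (n - ℓ)) (hℓ : 0 < ℓ) (hℓn : ℓ ≤ n) : Composition n where
  blocks := c.blocks ++ [ℓ]
  blocks_pos hi := by
    rcases List.mem_append.1 hi with hi | hi
    · exact c.blocks_pos hi
    · rwa [List.mem_singleton.1 hi]
  blocks_sum := by simp [c.blocks_sum, hℓn]

lemma getLast?_blocks (hn : 0 < n) (c : Composition n) :
    c.blocks.getLast? = some (c.blocks.getLastD 0) := by
  have : c.blocks ≠ [] := by rw [Ne, blocks_eq_nil]; exact hn.ne'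
  simp [List.getLast?_eq_some_getLast this]

lemma sum_dropLast_add (c : Composition n) (h : c.blocks.getLast? = some ℓ) :
    c.blocks.dropLast.sum + ℓ = n := by
  simpa [c.blocks_sum] using congrArg List.sum (List.dropLast_append_getLast? ℓ h)

def dropLast (c : Composition n) (h : c.blocks.getLast? = some ℓ) : Composition (n - ℓ) where
  blocks := c.blocks.dropLast
  blocks_pos hi := c.blocks_pos (List.dropLast_subset _ hi)
  blocks_sum := by have := c.sum_dropLast_add h; omega

theorem sum_withBlocksGE_eq_sum_concat {M : Type*} [AddCommMonoid M] {m : ℕ} (hm : 0 < m)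
    (hn : 0 < n) (f : List ℕ → M) :
    ∑ c ∈ withBlocksGE m n, f c.blocks
      = ∑ ℓ ∈ Icc m n, ∑ c ∈ withBlocksGE m (n - ℓ), f (c.blocks ++ [ℓ]) := by
  have hlast {ℓ : ℕ} {c : Composition n}
      (hc : c ∈ {c ∈ withBlocksGE m n | c.blocks.getLastD 0 = ℓ}) : c.blocks.getLast? = some ℓ :=
    (mem_filter.1 hc).2 ▸ getLast?_blocks hn c
  rw [← sum_fiberwise_of_maps_to (g := fun c : Composition n => c.blocks.getLastD 0)]
  · refine sum_congr rfl fun ℓ hℓ => ?_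
    obtain ⟨hmℓ, hℓn⟩ := mem_Icc.1 hℓ
    symm
    refine sum_bij' (fun c _ => c.concat (hm.trans_le hmℓ) hℓn)
      (fun c hc => c.dropLast (hlast hc)) ?_ ?_ ?_ ?_ ?_
    · intro c hc
      simp only [mem_filter, mem_withBlocksGE, concat, List.mem_append, List.mem_singleton]
      refine ⟨?_, by simp⟩
      rintro i (hi | rfl)
      exacts [mem_withBlocksGE.1 hc i hi, hmℓ]
    · intro c hc
      exact mem_withBlocksGE.2 fun i hi =>
        mem_withBlocksGE.1 (mem_filter.1 hc).1 i (List.dropLast_subset _ hi)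
    · intro c _
      ext1
      simp [concat, dropLast]
    · intro c hc
      ext1
      exact List.dropLast_append_getLast? ℓ (hlast hc)
    · intro c _
      simp [concat]
  · intro c hc
    rw [mem_Icc]
    have := c.sum_dropLast_add (getLast?_blocks hn c)
    exact ⟨mem_withBlocksGE.1 hc _ (List.mem_of_getLast? (getLast?_blocks hn c)), by omega⟩

end Composition

lemma PiI_concat (l : List ℕ) (ℓ : ℕ) :
    PiI (l ++ [ℓ]) = PiI l * (((l.sum + ℓ : ℕ) : ℝ) * ((l.sum + ℓ : ℕ) + 1)) := by
  rw [PiI, List.length_append, List.length_singleton, prod_range_succ,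
    List.take_of_length_le (by simp), List.sum_append, List.sum_singleton, PiI]
  congr 1
  refine prod_congr rfl fun m hm => ?_
  rw [List.take_append_of_le_length (by simpa using hm)]

lemma ι_eq_smul_Xtilde (j : ℕ) : FreeAlgebra.ι ℝ j = (-((j - 2).factorial : ℝ)) • Xtilde j := by
  rw [Xtilde, smul_smul, neg_div, neg_mul_neg, one_div, mul_inv_cancel₀ (by positivity), one_smul]

lemma choose_mul_mul_factorial_mul_factorial {k ℓ : ℕ} (h2ℓ : 2 ≤ ℓ) (hℓk : ℓ ≤ k) :
    (k.choose ℓ : ℝ) * ((ℓ : ℝ) - 1) * ℓ * (ℓ - 2).factorial * (k - ℓ).factorial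
      = k.factorial := by
  obtain ⟨j, rfl⟩ := Nat.exists_eq_add_of_le' h2ℓ
  rw [← Nat.choose_mul_factorial_mul_factorial hℓk, Nat.add_sub_cancel, Nat.factorial_succ,
    Nat.factorial_succ]
  push_cast
  ring

def SatisfiesQtildeRecurrence (Q : ℕ → FreeAlgebra ℝ ℕ) : Prop :=
  ∀ k : ℕ, 1 ≤ k → ((k : ℝ) * (k + 1)) • Q k
      = -∑ ℓ ∈ Icc 2 k, ((k.choose ℓ : ℝ) * ((ℓ : ℝ) - 1) * ℓ) • (FreeAlgebra.ι ℝ ℓ * Q (k - ℓ))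

theorem eq_of_satisfiesQtildeRecurrence {Q Q' : ℕ → FreeAlgebra ℝ ℕ} (h0 : Q 0 = Q' 0)
    (hQ : SatisfiesQtildeRecurrence Q) (hQ' : SatisfiesQtildeRecurrence Q') : Q = Q' := by
  funext k
  induction k using Nat.strong_induction_on with
  | _ k ih =>
    rcases Nat.eq_zero_or_pos k with rfl | hk
    · exact h0
    · refine smul_right_injective _ (by positivity : ((k : ℝ) * (k + 1)) ≠ 0) ?_
      simp only [hQ k hk, hQ' k hk]
      refine congrArg _ (sum_congr rfl fun ℓ hℓ => ?_)
      rw [ih (k - ℓ) (by have := (mem_Icc.1 hℓ).1; omega)]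

noncomputable def QtildeClosedForm (k : ℕ) : FreeAlgebra ℝ ℕ :=
  ∑ c ∈ Composition.withBlocksGE 2 k,
    ((k.factorial : ℝ) / PiI c.blocks) • (c.blocks.reverse.map Xtilde).prod

lemma QtildeClosedForm_zero : QtildeClosedForm 0 = 1 := by
  have : Composition.withBlocksGE 2 0 = {Composition.ones 0} := by
    refine eq_singleton_iff_unique_mem.2 ⟨by simp [Composition.mem_withBlocksGE], fun c _ => ?_⟩
    ext1
    simp [Composition.blocks_eq_nil]
  simp [QtildeClosedForm, this, PiI]

lemma smul_factorial_div_PiI_concat_smul {k ℓ : ℕ} (hk : 0 < k) (l : List ℕ)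
    (hl : l.sum + ℓ = k) :
    ((k : ℝ) * (k + 1)) •
        (((k.factorial : ℝ) / PiI (l ++ [ℓ])) • ((l ++ [ℓ]).reverse.map Xtilde).prod)
      = ((k.factorial : ℝ) / PiI l) • (Xtilde ℓ * (l.reverse.map Xtilde).prod) := by
  have hk' : ((k : ℝ) * (k + 1)) ≠ 0 := by positivity
  rw [smul_smul, PiI_concat, hl, mul_comm (PiI l), ← div_div, mul_div_assoc',
    mul_div_cancel₀ _ hk']
  simp

lemma neg_smul_ι_mul_factorial_div_PiI_smul {k ℓ : ℕ} (h2ℓ : 2 ≤ ℓ) (hℓk : ℓ ≤ k) (l : List ℕ) :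
    -(((k.choose ℓ : ℝ) * ((ℓ : ℝ) - 1) * ℓ) •
        (FreeAlgebra.ι ℝ ℓ * ((((k - ℓ).factorial : ℝ) / PiI l) • (l.reverse.map Xtilde).prod)))
      = ((k.factorial : ℝ) / PiI l) • (Xtilde ℓ * (l.reverse.map Xtilde).prod) := by
  rw [ι_eq_smul_Xtilde, smul_mul_smul_comm, smul_smul, ← neg_smul,
    ← choose_mul_mul_factorial_mul_factorial h2ℓ hℓk]
  congr 1
  ring

lemma satisfiesQtildeRecurrence_QtildeClosedForm : SatisfiesQtildeRecurrence QtildeClosedForm := by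
  intro k hk
  rw [QtildeClosedForm, Composition.sum_withBlocksGE_eq_sum_concat two_pos hk
    (fun l => ((k.factorial : ℝ) / PiI l) • (l.reverse.map Xtilde).prod), smul_sum,
    ← sum_neg_distrib]
  refine sum_congr rfl fun ℓ hℓ => ?_
  obtain ⟨h2ℓ, hℓk⟩ := mem_Icc.1 hℓ
  rw [QtildeClosedForm, mul_sum, smul_sum, smul_sum, ← sum_neg_distrib]
  refine sum_congr rfl fun c _ => ?_
  rw [smul_factorial_div_PiI_concat_smul hk c.blocks (by rw [c.blocks_sum]; omega),
    neg_smul_ι_mul_factorial_div_PiI_smul h2ℓ hℓk]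

/-- the solution of the recursion
`Q̃₀ = 1`, `Q̃ₖ = -(1/(k(k+1))) ∑_{ℓ=2}^{k} C(k,ℓ)(ℓ-1)ℓ Xₗ Q̃_{k-ℓ}`
is given by the closed formula
`Q̃ₖ = ∑_{I : deg I = k} (k!/Π_I) X̃_{i_r}⋯X̃_{i₁}`,
the sum being over all finite sequences `I = (i₁,…,i_r)` of integers `≥ 2` with sum `k`. -/
theorem Qtilde_closed_formula (Qt : ℕ → FreeAlgebra ℝ ℕ)
    (h0 : Qt 0 = 1)
    (hrec : ∀ k : ℕ, 1 ≤ k → ((k : ℝ) * (k + 1)) • Qt k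
      = - ∑ ℓ ∈ Finset.Icc 2 k,
          (((k.choose ℓ : ℝ)) * ((ℓ : ℝ) - 1) * (ℓ : ℝ)) • (FreeAlgebra.ι ℝ ℓ * Qt (k - ℓ))) :
    ∀ k : ℕ, 1 ≤ k →
      Qt k = ∑ c ∈ Finset.univ.filter (fun c : Composition k => ∀ i ∈ c.blocks, 2 ≤ i),
        ((k.factorial : ℝ) / PiI c.blocks) • (c.blocks.reverse.map Xtilde).prod := by
  intro k _
  rw [eq_of_satisfiesQtildeRecurrence (h0.trans QtildeClosedForm_zero.symm) hrec
    satisfiesQtildeRecurrence_QtildeClosedForm]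
  rfl
end

section
/- With $Q_k := \sum_{\ell=0}^{k}\binom{k}{\ell}\tilde{Q}_\ell^* \tilde{Q}_{k-\ell}$ as above, for every $k \geq 0$ the coefficient of the generator $X_{k+2}$ in $Q_{k+2}$ equals $-2\frac{k+1}{k+3}$; that is, $Q_{k+2} = -2\frac{k+1}{k+3}X_{k+2} + (\text{a linear combination of words in } X_2,\ldots,X_{k+1} \text{ only})$. -/
/-!
Writing `A n` for the subalgebra generated by `X₂, …, Xₙ`, the recursion shows by strong
induction that `Q̃ₘ ∈ A m`, and isolating its `ℓ = m` term gives
`Q̃ₘ = -(m-1)/(m+1) Xₘ + (element of A (m-1))`. In `Q_{k+2}` the terms `ℓ = 0` and `ℓ = k+2`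
are `Q̃_{k+2}` and `Q̃_{k+2}*`, each contributing `-(k+1)/(k+3) X_{k+2}` since `*` fixes
the generators and preserves every `A n`; all other terms are products of elements of `A (k+1)`.
-/

open FreeAlgebra

abbrev wordsUpTo (R : Type*) [CommSemiring R] (n : ℕ) : Subalgebra R (FreeAlgebra R ℕ) :=
  Algebra.adjoin R (ι R '' Set.Icc 2 n)

section Generators

variable {R : Type*} [CommSemiring R]

theorem wordsUpTo_mono {a b : ℕ} (h : a ≤ b) : wordsUpTo R a ≤ wordsUpTo R b :=
  Algebra.adjoin_mono (Set.image_mono (Set.Icc_subset_Icc_right h))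

theorem ι_mem_wordsUpTo {i n : ℕ} (h2 : 2 ≤ i) (hn : i ≤ n) : ι R i ∈ wordsUpTo R n :=
  Algebra.subset_adjoin ⟨i, ⟨h2, hn⟩, rfl⟩

theorem map_mem_wordsUpTo_of_antihom (s : FreeAlgebra R ℕ →ₗ[R] FreeAlgebra R ℕ)
    (hs1 : s 1 = 1) (hsmul : ∀ a b, s (a * b) = s b * s a) (hsgen : ∀ i, s (ι R i) = ι R i)
    {n : ℕ} {x : FreeAlgebra R ℕ} (hx : x ∈ wordsUpTo R n) : s x ∈ wordsUpTo R n := by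
  induction hx using Algebra.adjoin_induction with
  | mem y hy =>
    obtain ⟨i, hi, rfl⟩ := hy
    rw [hsgen]
    exact Algebra.subset_adjoin ⟨i, hi, rfl⟩
  | algebraMap r =>
    rw [Algebra.algebraMap_eq_smul_one, map_smul, hs1]
    exact Subalgebra.smul_mem _ (one_mem _) r
  | add a b _ _ iha ihb => rw [map_add]; exact add_mem iha ihb
  | mul a b _ _ iha ihb => rw [hsmul]; exact mul_mem ihb iha

end Generators

section Recursion

def QtRecursion {K : Type*} [CommRing K] (Qt : ℕ → FreeAlgebra K ℕ) : Prop :=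
  ∀ k : ℕ, 1 ≤ k → ((k : K) * (k + 1)) • Qt k
    = - ∑ ℓ ∈ Finset.Icc 2 k, ((k.choose ℓ : K) * ((ℓ : K) - 1) * ℓ) • (ι K ℓ * Qt (k - ℓ))

variable {K : Type*} [Field K] [CharZero K] {Qt : ℕ → FreeAlgebra K ℕ}

theorem Qt_mem_wordsUpTo_self (h0 : Qt 0 = 1)
    (hrec : QtRecursion Qt)
    (m : ℕ) : Qt m ∈ wordsUpTo K m := by
  induction m using Nat.strong_induction_on with
  | _ m ih =>
    rcases Nat.eq_zero_or_pos m with rfl | hm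
    · rw [h0]; exact one_mem _
    have hc : ((m : K) * (m + 1)) ≠ 0 := by exact_mod_cast (by positivity : m * (m + 1) ≠ 0)
    refine (Submodule.smul_mem_iff (Subalgebra.toSubmodule (wordsUpTo K m)) hc).mp ?_
    rw [Subalgebra.mem_toSubmodule, hrec m hm]
    refine neg_mem (sum_mem fun ℓ hℓ => ?_)
    obtain ⟨h2, hle⟩ := Finset.mem_Icc.mp hℓ
    exact Subalgebra.smul_mem _ (mul_mem (ι_mem_wordsUpTo h2 hle)
      (wordsUpTo_mono (Nat.sub_le m ℓ) (ih _ (by omega)))) _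

theorem Qt_mem_wordsUpTo (h0 : Qt 0 = 1)
    (hrec : QtRecursion Qt)
    {m n : ℕ} (h : m ≤ n) : Qt m ∈ wordsUpTo K n :=
  wordsUpTo_mono h (Qt_mem_wordsUpTo_self h0 hrec m)

theorem Qt_eq_smul_ι_add (h0 : Qt 0 = 1)
    (hrec : QtRecursion Qt)
    (n : ℕ) : ∃ r ∈ wordsUpTo K (n + 1),
      Qt (n + 2) = (-((n : K) + 1) / ((n : K) + 3)) • ι K (n + 2) + r := by
  have hrec' := hrec (n + 2) (by omega)
  rw [show Finset.Icc 2 (n + 2) = insert (n + 2) (Finset.Icc 2 (n + 1)) from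
    (Finset.insert_Icc_right_eq_Icc_add_one (by omega)).symm, Finset.sum_insert (by simp)] at hrec'
  simp only [Nat.choose_self, Nat.sub_self, h0, mul_one, Nat.cast_one, one_mul] at hrec'
  set T := ∑ ℓ ∈ Finset.Icc 2 (n + 1),
    (((n + 2).choose ℓ : K) * ((ℓ : K) - 1) * (ℓ : K)) • (ι K ℓ * Qt (n + 2 - ℓ))
  have hT : T ∈ wordsUpTo K (n + 1) := by
    refine sum_mem fun ℓ hℓ => ?_
    obtain ⟨h2, hle⟩ := Finset.mem_Icc.mp hℓ
    exact Subalgebra.smul_mem _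
      (mul_mem (ι_mem_wordsUpTo h2 hle) (Qt_mem_wordsUpTo h0 hrec (by omega))) _
  have h2 : (n : K) + 2 ≠ 0 := by exact_mod_cast (n + 1).succ_ne_zero
  have h3 : (n : K) + 3 ≠ 0 := by exact_mod_cast (n + 2).succ_ne_zero
  refine ⟨-(((n : K) + 2) * ((n : K) + 3))⁻¹ • T, Subalgebra.smul_mem _ hT _, ?_⟩
  rw [← inv_smul_smul₀ (mul_ne_zero h2 h3) (Qt (n + 2))]
  push_cast at hrec'
  rw [add_assoc (n : K) 2 1, two_add_one_eq_three] at hrec'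
  rw [hrec']
  match_scalars
  · field_simp
    ring
  · ring

end Recursion

/-- in `Q_{k+2} = ∑ₗ C(k+2,ℓ) Q̃ₗ* Q̃_{k+2-ℓ}` the generator `X_{k+2}` occurs
with coefficient `-2(k+1)/(k+3)`, all remaining terms being linear combinations of words
in `X₂,…,X_{k+1}` only. -/
theorem Q_leading_coefficient (Qt : ℕ → FreeAlgebra ℝ ℕ)
    (h0 : Qt 0 = 1)
    (hrec : ∀ k : ℕ, 1 ≤ k → ((k : ℝ) * (k + 1)) • Qt k
      = - ∑ ℓ ∈ Finset.Icc 2 k,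
          (((k.choose ℓ : ℝ)) * ((ℓ : ℝ) - 1) * (ℓ : ℝ)) • (FreeAlgebra.ι ℝ ℓ * Qt (k - ℓ)))
    (s : FreeAlgebra ℝ ℕ →ₗ[ℝ] FreeAlgebra ℝ ℕ)
    (hs1 : s 1 = 1)
    (hsmul : ∀ a b, s (a * b) = s b * s a)
    (hsgen : ∀ i, s (FreeAlgebra.ι ℝ i) = FreeAlgebra.ι ℝ i) :
    ∀ k : ℕ, ∃ r ∈ Algebra.adjoin ℝ ((FreeAlgebra.ι ℝ) '' (Set.Icc 2 (k + 1))),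
      ∑ ℓ ∈ Finset.range (k + 3), ((k + 2).choose ℓ : ℝ) • (s (Qt ℓ) * Qt (k + 2 - ℓ))
        = (-2 * ((k : ℝ) + 1) / ((k : ℝ) + 3)) • FreeAlgebra.ι ℝ (k + 2) + r := by
  intro k
  have hs {x : FreeAlgebra ℝ ℕ} : x ∈ wordsUpTo ℝ (k + 1) → s x ∈ wordsUpTo ℝ (k + 1) :=
    map_mem_wordsUpTo_of_antihom s hs1 hsmul hsgen
  obtain ⟨r, hr, hQ⟩ := Qt_eq_smul_ι_add h0 hrec k
  set M := ∑ i ∈ Finset.range (k + 1),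
    ((k + 2).choose (i + 1) : ℝ) • (s (Qt (i + 1)) * Qt (k + 2 - (i + 1)))
  have hM : M ∈ wordsUpTo ℝ (k + 1) :=
    sum_mem fun i hi => Subalgebra.smul_mem _ (mul_mem
      (hs (Qt_mem_wordsUpTo h0 hrec (Finset.mem_range.mp hi)))
      (Qt_mem_wordsUpTo h0 hrec (by omega))) _
  have hsplit : ∑ ℓ ∈ Finset.range (k + 3), ((k + 2).choose ℓ : ℝ) • (s (Qt ℓ) * Qt (k + 2 - ℓ))
      = s (Qt (k + 2)) + M + Qt (k + 2) := by
    rw [Finset.sum_range_succ, Finset.sum_range_succ']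
    simp only [Nat.choose_self, Nat.choose_zero_right, Nat.sub_self, Nat.sub_zero, h0, hs1,
      Nat.cast_one, one_smul, one_mul, mul_one]
    abel
  refine ⟨M + r + s r, add_mem (add_mem hM hr) (hs hr), ?_⟩
  rw [hsplit, hQ, map_add, map_smul, hsgen,
    show -2 * ((k : ℝ) + 1) / ((k : ℝ) + 3) = -((k : ℝ) + 1) / (k + 3) + -((k : ℝ) + 1) / (k + 3)
      by ring, add_smul]
  abel
end
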